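/- Canonical form theorem (1-dimensional case): every formally self-adjoint linear differential operator L of order k on smooth functions on ℝ with smooth coefficients can be written as L = Σ_{i=0}^{k/2} D^i ∘ (S_i ·) ∘ D^i for suitable smooth functions S_i, where (S_i ·) denotes multiplication by S_i. -/

import Mathlib

open MeasureTheory Finset

/-- `i`-th iterated derivative `D^i`. -/
noncomputable def Dop (i : ℕ) (f : ℝ → ℝ) : ℝ → ℝ := deriv^[i] f

/-- The differential operator `L = Σ_{i=0}^k a_i D^i`. -/
noncomputable def LOp (k : ℕ) (a : ℕ → ℝ → ℝ) (f : ℝ → ℝ) : ℝ → ℝ :=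
  fun x => ∑ i ∈ Finset.range (k + 1), a i x * Dop i f x

/-- The formal adjoint `L* g = Σ_{i=0}^k (-1)^i D^i (a_i · g)`. -/
noncomputable def adjOp (k : ℕ) (a : ℕ → ℝ → ℝ) (g : ℝ → ℝ) : ℝ → ℝ :=
  fun x => ∑ i ∈ Finset.range (k + 1), (-1 : ℝ) ^ i * Dop i (fun y => a i y * g y) x

/-! ### Basic lemmas on `Dop` -/

section Basic

lemma Sm_deriv {f : ℝ → ℝ} (hf : ContDiff ℝ (⊤ : ℕ∞) f) : ContDiff ℝ (⊤ : ℕ∞) (deriv f) := by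
  exact (contDiff_infty_iff_deriv.mp hf).2

lemma Sm_Dop {f : ℝ → ℝ} (hf : ContDiff ℝ (⊤ : ℕ∞) f) (i : ℕ) : ContDiff ℝ (⊤ : ℕ∞) (Dop i f) := by
  induction i with
  | zero => exact hf
  | succ n ih =>
      have : Dop (n+1) f = deriv (Dop n f) := Function.iterate_succ_apply' deriv n f
      rw [this]; exact Sm_deriv ih

lemma Dop_succ' (i : ℕ) (f : ℝ → ℝ) : Dop (i+1) f = deriv (Dop i f) :=
  Function.iterate_succ_apply' deriv i f

lemma Dop_zero (f : ℝ → ℝ) : Dop 0 f = f := rfl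

lemma Dop_Dop (m n : ℕ) (f : ℝ → ℝ) : Dop m (Dop n f) = Dop (m + n) f :=
  (Function.iterate_add_apply deriv m n f).symm

lemma Diff_Dop {f : ℝ → ℝ} (hf : ContDiff ℝ (⊤ : ℕ∞) f) (i : ℕ) : Differentiable ℝ (Dop i f) :=
  (Sm_Dop hf i).differentiable (by simp)

lemma Dop_zero_fun (n : ℕ) : Dop n (fun _ : ℝ => (0:ℝ)) = fun _ => (0:ℝ) := by
  induction n with
  | zero => rfl
  | succ m ih => rw [Dop_succ', ih]; funext x; simp

lemma Dop_sub {f g : ℝ → ℝ} (hf : ContDiff ℝ (⊤ : ℕ∞) f) (hg : ContDiff ℝ (⊤ : ℕ∞) g) (n : ℕ) :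
    Dop n (fun y => f y - g y) = fun x => Dop n f x - Dop n g x := by
  induction n with
  | zero => rfl
  | succ m ih =>
      rw [Dop_succ', ih]
      funext x
      rw [deriv_fun_sub ((Diff_Dop hf m) x) ((Diff_Dop hg m) x), Dop_succ', Dop_succ']

lemma Dop_const_mul {f : ℝ → ℝ} (hf : ContDiff ℝ (⊤ : ℕ∞) f) (c : ℝ) (n : ℕ) :
    Dop n (fun y => c * f y) = fun x => c * Dop n f x := by
  induction n with
  | zero => rfl
  | succ m ih =>
      rw [Dop_succ', ih]
      funext x
      rw [deriv_const_mul c ((Diff_Dop hf m) x), Dop_succ']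

/-- Leibniz rule for iterated derivatives. -/
lemma Dop_mul {f g : ℝ → ℝ} (hf : ContDiff ℝ (⊤ : ℕ∞) f) (hg : ContDiff ℝ (⊤ : ℕ∞) g) (n : ℕ) :
    Dop n (fun y => f y * g y) =
      fun x => ∑ r ∈ range (n+1), (n.choose r : ℝ) * (Dop r f x * Dop (n - r) g x) := by
  induction n with
  | zero => funext x; simp [Dop_zero]
  | succ m ih =>
      rw [Dop_succ', ih]
      funext x
      have hdiff : ∀ r : ℕ, DifferentiableAt ℝ
          (fun y => (m.choose r : ℝ) * (Dop r f y * Dop (m - r) g y)) x := by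
        intro r
        exact (((Diff_Dop hf r) x).mul ((Diff_Dop hg (m-r)) x)).const_mul _
      rw [deriv_fun_sum (fun r _ => hdiff r)]
      have hterm : ∀ r ∈ range (m+1),
          deriv (fun y => (m.choose r : ℝ) * (Dop r f y * Dop (m - r) g y)) x
            = (m.choose r : ℝ) * (Dop (r+1) f x * Dop (m - r) g x)
              + (m.choose r : ℝ) * (Dop r f x * Dop (m - r + 1) g x) := by
        intro r _
        rw [deriv_const_mul _ (show DifferentiableAt ℝ (fun y => Dop r f y * Dop (m - r) g y) x
            from ((Diff_Dop hf r) x).mul ((Diff_Dop hg (m-r)) x)),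
          deriv_fun_mul ((Diff_Dop hf r) x) ((Diff_Dop hg (m-r)) x), ← Dop_succ', ← Dop_succ']
        ring
      rw [Finset.sum_congr rfl hterm, Finset.sum_add_distrib]
      have key : ∑ j ∈ range (m+2), ((m+1).choose j : ℝ) * (Dop j f x * Dop (m+1-j) g x)
          = (∑ r ∈ range (m+1), (m.choose r : ℝ) * (Dop (r+1) f x * Dop (m - r) g x))
            + ∑ r ∈ range (m+1), (m.choose r : ℝ) * (Dop r f x * Dop (m - r + 1) g x) := by
        rw [Finset.sum_range_succ' (fun j => ((m+1).choose j : ℝ) * (Dop j f x * Dop (m+1-j) g x)) (m+1)]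
        have h1 : ∀ i ∈ range (m+1),
            (((m+1).choose (i+1) : ℝ)) * (Dop (i+1) f x * Dop (m+1-(i+1)) g x)
              = (m.choose i : ℝ) * (Dop (i+1) f x * Dop (m - i) g x)
                + (m.choose (i+1) : ℝ) * (Dop (i+1) f x * Dop (m - i) g x) := by
          intro i _
          have : (m+1).choose (i+1) = m.choose i + m.choose (i+1) := Nat.choose_succ_succ m i
          rw [this]
          push_cast
          ring
        rw [Finset.sum_congr rfl h1, Finset.sum_add_distrib]
        have h2 : ∑ i ∈ range (m+1), (m.choose (i+1) : ℝ) * (Dop (i+1) f x * Dop (m-i) g x)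
            + (((m+1).choose 0 : ℝ)) * (Dop 0 f x * Dop (m+1-0) g x)
            = ∑ r ∈ range (m+1), (m.choose r : ℝ) * (Dop r f x * Dop (m - r + 1) g x) := by
          rw [Finset.sum_range_succ (fun i => (m.choose (i+1) : ℝ) * (Dop (i+1) f x * Dop (m-i) g x)) m]
          simp only [Nat.choose_succ_self, Nat.cast_zero, zero_mul, add_zero, Nat.choose_zero_right]
          rw [Finset.sum_range_succ' (fun r => (m.choose r : ℝ) * (Dop r f x * Dop (m - r + 1) g x)) m]
          simp only [Nat.choose_zero_right, Nat.cast_one, one_mul, Nat.sub_zero]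
          congr 1
          · apply Finset.sum_congr rfl
            intro i hi
            simp only [mem_range] at hi
            have : m - (i+1) + 1 = m - i := by omega
            rw [this]
        rw [add_assoc, h2]
      rw [key]

end Basic

/-! ### Polynomial test functions and coefficient extraction -/

section Extraction

open Polynomial

lemma Dop_polyeval (p : Polynomial ℝ) (n : ℕ) :
    Dop n (fun y => p.eval y) = fun y => (derivative^[n] p).eval y := by
  induction n generalizing p with
  | zero => rfl
  | succ m ih =>
      rw [show Dop (m+1) (fun y => p.eval y) = Dop m (deriv (fun y => p.eval y)) from
        Function.iterate_succ_apply deriv m _, show deriv (fun y => p.eval y)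
          = fun y => (derivative p).eval y from funext fun y => Polynomial.deriv p, ih]
      funext y
      rw [Function.iterate_succ_apply]

lemma Dop_pow_sub (j n : ℕ) (x₀ : ℝ) :
    Dop n (fun y => (y - x₀)^j) x₀ = if n = j then (j.factorial : ℝ) else 0 := by
  have hp : (fun y : ℝ => (y - x₀)^j) = fun y => (((X - C x₀)^j : Polynomial ℝ)).eval y := by
    funext y; simp
  rw [hp, Dop_polyeval, Polynomial.iterate_derivative_X_sub_pow]
  simp only [eval_smul, eval_pow, eval_sub, eval_X, eval_C, sub_self, smul_eq_mul]
  rcases lt_trichotomy n j with h | h | h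
  · rw [if_neg (by omega), zero_pow (by omega)]; ring
  · subst h; simp [Nat.descFactorial_self]
  · rw [if_neg (by omega), Nat.descFactorial_eq_zero_iff_lt.mpr h]
    simp

lemma coeff_ext {k : ℕ} {b c : ℕ → ℝ → ℝ}
    (h : ∀ f : ℝ → ℝ, ContDiff ℝ (⊤ : ℕ∞) f → ∀ x,
      ∑ i ∈ range (k+1), b i x * Dop i f x = ∑ i ∈ range (k+1), c i x * Dop i f x) :
    ∀ j ∈ range (k+1), ∀ x, b j x = c j x := by
  intro j hj x
  have hf : ContDiff ℝ (⊤ : ℕ∞) (fun y : ℝ => (y - x)^j) :=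
    (contDiff_id.sub contDiff_const).pow j
  have := h _ hf x
  have hcollapse : ∀ d : ℕ → ℝ → ℝ, ∑ i ∈ range (k+1), d i x * Dop i (fun y => (y-x)^j) x
      = d j x * (j.factorial : ℝ) := by
    intro d
    rw [Finset.sum_eq_single j]
    · rw [Dop_pow_sub, if_pos rfl]
    · intro i _ hij; rw [Dop_pow_sub, if_neg hij]; ring
    · intro hcon; exact absurd hj hcon
  rw [hcollapse b, hcollapse c] at this
  have hfac : (j.factorial : ℝ) ≠ 0 := by positivity
  exact mul_right_cancel₀ hfac this

end Extraction

/-! ### The binomial identity -/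

section Binom

open Polynomial

lemma binom_poly (m j : ℕ) :
    ∑ t ∈ range (m+1), (-1:ℝ)^(t+m) * (m.choose t : ℝ) * ((t+m).choose j : ℝ)
      = if m ≤ j then (m.choose (j-m) : ℝ) else 0 := by
  have key : ((X+1:ℝ[X])^m * X^m)
      = ∑ t ∈ range (m+1), C ((-1:ℝ)^(t+m) * (m.choose t : ℝ)) * (X+1)^(t+m) := by
    calc (X+1:ℝ[X])^m * X^m = ((X+1)-1)^m * (X+1)^m := by ring_nf
      _ = ∑ t ∈ range (m+1), C ((-1:ℝ)^(t+m) * (m.choose t : ℝ)) * (X+1)^(t+m) := by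
          rw [sub_pow, Finset.sum_mul]
          apply Finset.sum_congr rfl
          intro t _
          rw [pow_add]
          simp only [map_mul, map_pow, map_neg, map_one, C_eq_natCast, one_pow]
          ring
  have hc := congrArg (fun p : ℝ[X] => p.coeff j) key
  simp only [finset_sum_coeff, coeff_C_mul, coeff_X_add_one_pow, coeff_mul_X_pow'] at hc
  rw [← hc]

lemma binom (m j : ℕ) :
    ∑ i ∈ range (2*m+1), (-1:ℝ)^i * (i.choose j : ℝ) * (if m ≤ i then (m.choose (i-m):ℝ) else 0)
      = if m ≤ j then (m.choose (j-m) : ℝ) else 0 := by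
  have step : ∑ i ∈ range (2*m+1),
      (-1:ℝ)^i * (i.choose j : ℝ) * (if m ≤ i then (m.choose (i-m):ℝ) else 0)
      = ∑ t ∈ range (m+1), (-1:ℝ)^(t+m) * (m.choose t : ℝ) * ((t+m).choose j : ℝ) := by
    rw [range_eq_Ico, ← Finset.sum_Ico_consecutive _ (Nat.zero_le m) (by omega : m ≤ 2*m+1)]
    have h0 : ∑ i ∈ Finset.Ico 0 m,
        (-1:ℝ)^i * (i.choose j : ℝ) * (if m ≤ i then (m.choose (i-m):ℝ) else 0) = 0 := by
      apply Finset.sum_eq_zero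
      intro i hi
      simp only [Finset.mem_Ico] at hi
      rw [if_neg (by omega)]
      ring
    rw [h0, zero_add, Finset.sum_Ico_eq_sum_range]
    have hrange : 2*m+1-m = m+1 := by omega
    rw [hrange]
    apply Finset.sum_congr rfl
    intro t _
    rw [if_pos (by omega : m ≤ m + t)]
    have h1 : m + t - m = t := by omega
    have h2 : m + t = t + m := by omega
    rw [h1, h2]
    ring
  rw [step, binom_poly]

end Binom

/-! ### Adjoint coefficients -/

/-- The coefficients of the formal adjoint. -/
noncomputable def adjC (k : ℕ) (a : ℕ → ℝ → ℝ) (j : ℕ) : ℝ → ℝ :=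
  fun x => ∑ i ∈ range (k+1), (-1:ℝ)^i * (i.choose j : ℝ) * Dop (i-j) (a i) x

lemma adj_expand {k : ℕ} {a : ℕ → ℝ → ℝ} (ha : ∀ i, ContDiff ℝ (⊤ : ℕ∞) (a i))
    {g : ℝ → ℝ} (hg : ContDiff ℝ (⊤ : ℕ∞) g) (x : ℝ) :
    adjOp k a g x = ∑ j ∈ range (k+1), adjC k a j x * Dop j g x := by
  have hterm : ∀ i ∈ range (k+1), (-1:ℝ)^i * Dop i (fun y => a i y * g y) x
      = ∑ r ∈ range (k+1), (-1:ℝ)^i * (i.choose r : ℝ) * Dop (i-r) (a i) x * Dop r g x := by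
    intro i hi
    simp only [mem_range] at hi
    have hcomm : (fun y => a i y * g y) = fun y => g y * a i y := by
      funext y; ring
    rw [hcomm, Dop_mul hg (ha i)]
    rw [Finset.mul_sum]
    rw [Finset.sum_subset (by exact Finset.range_subset_range.mpr (by omega) : range (i+1) ⊆ range (k+1))]
    · apply Finset.sum_congr rfl
      intro r _
      ring
    · intro r _ hr
      simp only [mem_range, not_lt] at hr
      rw [Nat.choose_eq_zero_of_lt (by omega)]
      simp
  calc adjOp k a g x = ∑ i ∈ range (k+1), (-1:ℝ)^i * Dop i (fun y => a i y * g y) x := rfl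
    _ = ∑ i ∈ range (k+1), ∑ r ∈ range (k+1),
          (-1:ℝ)^i * (i.choose r : ℝ) * Dop (i-r) (a i) x * Dop r g x :=
        Finset.sum_congr rfl hterm
    _ = ∑ r ∈ range (k+1), ∑ i ∈ range (k+1),
          (-1:ℝ)^i * (i.choose r : ℝ) * Dop (i-r) (a i) x * Dop r g x := Finset.sum_comm
    _ = ∑ j ∈ range (k+1), adjC k a j x * Dop j g x := by
        apply Finset.sum_congr rfl
        intro r _
        rw [adjC, Finset.sum_mul]

/-! ### The generator `D^m (S · D^m ·)` coefficientwise -/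

/-- Coefficients of the operator `D^m ∘ (S ·) ∘ D^m`. -/
noncomputable def cgen (S : ℝ → ℝ) (m j : ℕ) : ℝ → ℝ :=
  fun x => if m ≤ j then (m.choose (j-m) : ℝ) * Dop (2*m-j) S x else 0

lemma cgen_smooth {S : ℝ → ℝ} (hS : ContDiff ℝ (⊤ : ℕ∞) S) (m j : ℕ) :
    ContDiff ℝ (⊤ : ℕ∞) (cgen S m j) := by
  unfold cgen
  by_cases h : m ≤ j
  · simp only [if_pos h]
    exact contDiff_const.mul (Sm_Dop hS _)
  · simp only [if_neg h]
    exact contDiff_const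

lemma Dop_cgen {S : ℝ → ℝ} (hS : ContDiff ℝ (⊤ : ℕ∞) S) (m i n : ℕ) :
    Dop n (cgen S m i) = fun x =>
      if m ≤ i then (m.choose (i-m) : ℝ) * Dop (n + (2*m-i)) S x else 0 := by
  by_cases h : m ≤ i
  · have : cgen S m i = fun x => (m.choose (i-m) : ℝ) * Dop (2*m-i) S x := by
      funext x; rw [cgen, if_pos h]
    rw [this, Dop_const_mul (Sm_Dop hS _), ]
    funext x
    rw [if_pos h, Dop_Dop]
  · have : cgen S m i = fun _ => (0:ℝ) := by
      funext x; rw [cgen, if_neg h]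
    rw [this, Dop_zero_fun]
    funext x
    rw [if_neg h]

lemma cgen_selfadj {S : ℝ → ℝ} (hS : ContDiff ℝ (⊤ : ℕ∞) S) (m : ℕ) (j : ℕ) (x : ℝ) :
    adjC (2*m) (cgen S m) j x = cgen S m j x := by
  rw [adjC]
  have hterm : ∀ i ∈ range (2*m+1),
      (-1:ℝ)^i * (i.choose j : ℝ) * Dop (i-j) (cgen S m i) x
        = ((-1:ℝ)^i * (i.choose j : ℝ) * (if m ≤ i then (m.choose (i-m):ℝ) else 0))
            * Dop (2*m-j) S x := by
    intro i hi
    simp only [mem_range] at hi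
    rw [Dop_cgen hS]
    simp only []
    by_cases hji : j ≤ i
    · have heq : (i-j) + (2*m-i) = 2*m-j := by omega
      rw [heq]
      by_cases h : m ≤ i
      · rw [if_pos h, if_pos h]; ring
      · rw [if_neg h, if_neg h]; ring
    · rw [Nat.choose_eq_zero_of_lt (by omega)]
      by_cases h : m ≤ i
      · rw [if_pos h]; push_cast; ring
      · rw [if_neg h]; push_cast; ring
  rw [Finset.sum_congr rfl hterm, ← Finset.sum_mul, binom, cgen]
  by_cases h : m ≤ j
  · rw [if_pos h, if_pos h]
  · rw [if_neg h, if_neg h]; ring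

/-! ### Reduction lemmas -/

lemma top_odd {n : ℕ} {a : ℕ → ℝ → ℝ} (hodd : Odd n)
    (h : ∀ x, a n x = adjC n a n x) : ∀ x, a n x = 0 := by
  intro x
  have h1 := h x
  rw [adjC, Finset.sum_eq_single n] at h1
  · rw [Nat.choose_self, Nat.sub_self, hodd.neg_one_pow] at h1
    have : Dop 0 (a n) x = a n x := rfl
    rw [this] at h1
    push_cast at h1
    linarith
  · intro i hi hne
    simp only [mem_range] at hi
    rw [Nat.choose_eq_zero_of_lt (by omega)]
    push_cast
    ring
  · intro hc
    exact absurd (Finset.self_mem_range_succ n) hc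

lemma adjC_drop {n : ℕ} {a : ℕ → ℝ → ℝ} (h0 : ∀ x, a (n+1) x = 0) (j : ℕ) (x : ℝ) :
    adjC (n+1) a j x = adjC n a j x := by
  rw [adjC, adjC, Finset.sum_range_succ]
  have ha : a (n+1) = fun _ : ℝ => (0:ℝ) := funext h0
  rw [ha, Dop_zero_fun]
  simp

/-! ### Main induction -/

theorem main_induction : ∀ n : ℕ, ∀ a : ℕ → ℝ → ℝ, (∀ i, ContDiff ℝ (⊤ : ℕ∞) (a i)) →
    (∀ j, j ≤ n → ∀ x, a j x = adjC n a j x) →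
    ∃ S : ℕ → ℝ → ℝ, (∀ i, ContDiff ℝ (⊤ : ℕ∞) (S i)) ∧
      ∀ j, j ≤ n → ∀ x, a j x =
        ∑ i ∈ range (n/2+1),
          (if i ≤ j then (i.choose (j-i) : ℝ) * Dop (2*i-j) (S i) x else 0) := by
  intro n
  induction n using Nat.strong_induction_on with
  | _ n IH =>
    intro a ha hsa
    rcases Nat.eq_zero_or_pos n with rfl | hpos
    · refine ⟨fun _ => a 0, fun _ => ha 0, ?_⟩
      intro j hj x
      interval_cases j
      simp [Dop_zero]
    rcases Nat.even_or_odd n with ⟨m, hm⟩ | hodd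
    · -- even case, n = 2m with m ≥ 1
      have hn : n = 2*m := by omega
      have hm1 : 1 ≤ m := by omega
      subst hn
      set T : ℝ → ℝ := a (2*m) with hT
      have hTs : ContDiff ℝ (⊤ : ℕ∞) T := ha _
      set c : ℕ → ℝ → ℝ := cgen T m with hc
      set a' : ℕ → ℝ → ℝ := fun j x => a j x - c j x with ha'def
      have ha' : ∀ i, ContDiff ℝ (⊤ : ℕ∞) (a' i) := fun i => (ha i).sub (cgen_smooth hTs m i)
      have hadj' : ∀ j, j ≤ 2*m → ∀ x, a' j x = adjC (2*m) a' j x := by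
        intro j hj x
        have expand : adjC (2*m) a' j x = adjC (2*m) a j x - adjC (2*m) c j x := by
          rw [adjC, adjC, adjC, ← Finset.sum_sub_distrib]
          apply Finset.sum_congr rfl
          intro i _
          have : a' i = fun y => a i y - c i y := rfl
          rw [this, Dop_sub (ha i) (cgen_smooth hTs m i)]
          ring
        rw [expand, ← hsa j hj x, cgen_selfadj hTs]
      have htop' : ∀ x, a' (2*m) x = 0 := by
        intro x
        have : c (2*m) x = a (2*m) x := by
          rw [hc, cgen, if_pos (by omega : m ≤ 2*m)]
          have h1 : 2*m - m = m := by omega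
          have h2 : 2*m - 2*m = 0 := by omega
          rw [h1, h2, Nat.choose_self]
          simp [Dop_zero, hT]
        simp [ha'def, this]
      -- drop to 2m-1
      have hadj'' : ∀ j, j ≤ 2*m - 1 → ∀ x, a' j x = adjC (2*m-1) a' j x := by
        intro j hj x
        have := hadj' j (by omega) x
        have hdrop := adjC_drop (n := 2*m-1) (a := a')
          (by intro x'; rw [show 2*m-1+1 = 2*m by omega]; exact htop' x') j x
        rw [show 2*m-1+1 = 2*m by omega] at hdrop
        rw [this, ← hdrop]
      have htop'' : ∀ x, a' (2*m-1) x = 0 :=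
        top_odd (by rw [Nat.odd_sub (by omega)]; simp [Nat.even_mul] : Odd (2*m-1))
          (fun x => hadj'' (2*m-1) le_rfl x)
      have hadj''' : ∀ j, j ≤ 2*m - 2 → ∀ x, a' j x = adjC (2*m-2) a' j x := by
        intro j hj x
        have := hadj'' j (by omega) x
        have hdrop := adjC_drop (n := 2*m-2) (a := a')
          (by intro x'; rw [show 2*m-2+1 = 2*m-1 by omega]; exact htop'' x') j x
        rw [show 2*m-2+1 = 2*m-1 by omega] at hdrop
        rw [this, ← hdrop]
      obtain ⟨S', hS's, hrep'⟩ := IH (2*m-2) (by omega) a' ha' hadj'''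
      set S'' : ℕ → ℝ → ℝ := fun i => if i = m then T else S' i with hS''
      have hS''m : S'' m = T := by simp [hS'']
      have hS''lt : ∀ i, i ≠ m → S'' i = S' i := by
        intro i h; simp [hS'', h]
      refine ⟨S'', ?_, ?_⟩
      · intro i
        by_cases h : i = m
        · rw [h, hS''m]; exact hTs
        · rw [hS''lt i h]; exact hS's i
      intro j hj x
      have hsplit : ∑ i ∈ range (2*m/2+1),
          (if i ≤ j then (i.choose (j-i) : ℝ) * Dop (2*i-j) (S'' i) x else 0)
          = (∑ i ∈ range m,
              (if i ≤ j then (i.choose (j-i) : ℝ) * Dop (2*i-j) (S' i) x else 0))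
            + c j x := by
        rw [show 2*m/2+1 = m+1 by omega, Finset.sum_range_succ]
        congr 1
        · apply Finset.sum_congr rfl
          intro i hi
          simp only [mem_range] at hi
          rw [hS''lt i (by omega)]
        · rw [hS''m, hc]
          simp only [cgen]
      rw [hsplit]
      by_cases hj2 : j ≤ 2*m-2
      · have := hrep' j hj2 x
        rw [show (2*m-2)/2+1 = m by omega] at this
        rw [← this]
        simp [ha'def]
      · -- j = 2m-1 or j = 2m : lower part vanishes and a' j = 0
        have hzero : ∑ i ∈ range m,
            (if i ≤ j then (i.choose (j-i) : ℝ) * Dop (2*i-j) (S' i) x else 0) = 0 := by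
          apply Finset.sum_eq_zero
          intro i hi
          simp only [mem_range] at hi
          by_cases h : i ≤ j
          · rw [if_pos h, Nat.choose_eq_zero_of_lt (by omega)]
            push_cast; ring
          · rw [if_neg h]
        rw [hzero, zero_add]
        have ha'j : a' j x = 0 := by
          rcases (by omega : j = 2*m-1 ∨ j = 2*m) with rfl | rfl
          · exact htop'' x
          · exact htop' x
        have : a j x - c j x = 0 := ha'j
        linarith
    · -- odd case
      obtain ⟨m, hm⟩ := hodd
      have htopz : ∀ x, a n x = 0 :=
        top_odd ⟨m, hm⟩ (fun x => hsa n le_rfl x)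
      have hadj2 : ∀ j, j ≤ n - 1 → ∀ x, a j x = adjC (n-1) a j x := by
        intro j hj x
        have := hsa j (by omega) x
        have hdrop := adjC_drop (n := n-1) (a := a)
          (by intro x'; rw [show n-1+1 = n by omega]; exact htopz x') j x
        rw [show n-1+1 = n by omega] at hdrop
        rw [this, ← hdrop]
      obtain ⟨S, hSs, hrep⟩ := IH (n-1) (by omega) a ha hadj2
      refine ⟨S, hSs, ?_⟩
      intro j hj x
      have hhalf : (n-1)/2 = n/2 := by omega
      by_cases hj1 : j ≤ n - 1
      · have := hrep j hj1 x
        rw [hhalf] at this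
        exact this
      · have hjn : j = n := by omega
        rw [hjn, htopz x]
        symm
        apply Finset.sum_eq_zero
        intro i hi
        simp only [mem_range] at hi
        by_cases h : i ≤ n
        · rw [if_pos h, Nat.choose_eq_zero_of_lt (by omega)]
          push_cast; ring
        · rw [if_neg h]

/-! ### Final assembly -/

/-- canonical form for formally self-adjoint operators:
L = sum over i of D^i (S_i · D^i -). -/
theorem selfadjoint_canonical_form (k : ℕ) (a : ℕ → ℝ → ℝ)
    (ha : ∀ i, ContDiff ℝ (⊤ : ℕ∞) (a i))
    (hsa : ∀ g : ℝ → ℝ, ContDiff ℝ (⊤ : ℕ∞) g → ∀ x, adjOp k a g x = LOp k a g x) :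
    ∃ S : ℕ → ℝ → ℝ, (∀ i, ContDiff ℝ (⊤ : ℕ∞) (S i)) ∧
      ∀ f : ℝ → ℝ, ContDiff ℝ (⊤ : ℕ∞) f → ∀ x,
        LOp k a f x =
          ∑ i ∈ Finset.range (k / 2 + 1), Dop i (fun y => S i y * Dop i f y) x := by
  -- self-adjointness at the level of coefficients
  have hcoeff : ∀ j, j ≤ k → ∀ x, a j x = adjC k a j x := by
    have h := coeff_ext (k := k) (b := adjC k a) (c := a) ?_
    · intro j hj x
      exact (h j (Finset.mem_range.mpr (by omega)) x).symm
    · intro f hf x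
      rw [← adj_expand ha hf x]
      exact hsa f hf x
  obtain ⟨S, hSs, hrep⟩ := main_induction k a ha hcoeff
  refine ⟨S, hSs, ?_⟩
  intro f hf x
  -- expand the right-hand side
  have hrhs : ∀ i, i ≤ k/2 → Dop i (fun y => S i y * Dop i f y) x
      = ∑ j ∈ range (k+1),
          (if i ≤ j then (i.choose (j-i) : ℝ) * Dop (2*i-j) (S i) x else 0) * Dop j f x := by
    intro i hik
    have h1 : Dop i (fun y => S i y * Dop i f y) x
        = ∑ r ∈ range (i+1), (i.choose r : ℝ) * (Dop r (S i) x * Dop (i-r) (Dop i f) x) := by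
      rw [Dop_mul (hSs i) (Sm_Dop hf i)]
    have h2 : ∑ r ∈ range (i+1), (i.choose r : ℝ) * (Dop r (S i) x * Dop (i-r) (Dop i f) x)
        = ∑ r ∈ range (i+1),
            (if i ≤ i+r then (i.choose ((i+r)-i) : ℝ) * Dop (2*i-(i+r)) (S i) x else 0)
              * Dop (i+r) f x := by
      rw [← Finset.sum_range_reflect (fun r =>
        (if i ≤ i+r then (i.choose ((i+r)-i) : ℝ) * Dop (2*i-(i+r)) (S i) x else 0)
          * Dop (i+r) f x) (i+1)]
      apply Finset.sum_congr rfl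
      intro r hr
      simp only [mem_range] at hr
      have er : i + 1 - 1 - r = i - r := by omega
      rw [er, if_pos (by omega : i ≤ i + (i - r))]
      have e2 : i + (i - r) - i = i - r := by omega
      have e3 : 2*i - (i + (i - r)) = r := by omega
      rw [e2, e3, Dop_Dop, show (i-r) + i = i + (i - r) by omega,
        Nat.choose_symm (by omega : r ≤ i)]
      ring
    have h3 : ∑ j ∈ Finset.Ico i (i+(i+1)),
          (if i ≤ j then (i.choose (j-i) : ℝ) * Dop (2*i-j) (S i) x else 0) * Dop j f x
        = ∑ r ∈ range (i+1),
            (if i ≤ i+r then (i.choose ((i+r)-i) : ℝ) * Dop (2*i-(i+r)) (S i) x else 0)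
              * Dop (i+r) f x := by
      rw [Finset.sum_Ico_eq_sum_range, show i + (i+1) - i = i+1 by omega]
    have h4 : ∑ j ∈ Finset.Ico i (i+(i+1)),
          (if i ≤ j then (i.choose (j-i) : ℝ) * Dop (2*i-j) (S i) x else 0) * Dop j f x
        = ∑ j ∈ range (k+1),
          (if i ≤ j then (i.choose (j-i) : ℝ) * Dop (2*i-j) (S i) x else 0) * Dop j f x := by
      apply Finset.sum_subset
      · intro j hj
        simp only [Finset.mem_Ico] at hj
        simp only [mem_range]
        omega
      · intro j hj hnot
        simp only [Finset.mem_Ico] at hnot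
        simp only [mem_range] at hj
        by_cases h : i ≤ j
        · rw [if_pos h, Nat.choose_eq_zero_of_lt (by omega)]
          push_cast; ring
        · rw [if_neg h]; ring
    rw [h1, h2, ← h3, h4]
  calc LOp k a f x = ∑ j ∈ range (k+1), a j x * Dop j f x := rfl
    _ = ∑ j ∈ range (k+1), (∑ i ∈ range (k/2+1),
          (if i ≤ j then (i.choose (j-i) : ℝ) * Dop (2*i-j) (S i) x else 0)) * Dop j f x := by
        apply Finset.sum_congr rfl
        intro j hj
        simp only [mem_range] at hj
        rw [hrep j (by omega) x]
    _ = ∑ j ∈ range (k+1), ∑ i ∈ range (k/2+1),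
          (if i ≤ j then (i.choose (j-i) : ℝ) * Dop (2*i-j) (S i) x else 0) * Dop j f x := by
        apply Finset.sum_congr rfl
        intro j _
        rw [Finset.sum_mul]
    _ = ∑ i ∈ range (k/2+1), ∑ j ∈ range (k+1),
          (if i ≤ j then (i.choose (j-i) : ℝ) * Dop (2*i-j) (S i) x else 0) * Dop j f x :=
        Finset.sum_comm
    _ = ∑ i ∈ Finset.range (k / 2 + 1), Dop i (fun y => S i y * Dop i f y) x := by
        apply Finset.sum_congr rfl
        intro i hi
        simp only [mem_range] at hi
        rw [hrhs i (by omega)]
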